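/- Let X be a continuum, A ⊆ X with T(A) = A, and let K be a connected component of A. Then T(K) = K (every component of a T-closed set is T-closed). -/

import Mathlib

/-!
Let `K` be the component of `x` in `A = T(A)` and let `p ∈ T(K)`; monotonicity of `T` gives
`p ∈ A`. Every continuum `C ∋ p` missing `K` lies in `A`: a point `q ∈ C \ A = C \ T(A)` lies
on a continuum `Z ⊆ X \ A` with interior, and `C ∪ Z ⊆ X \ K` would contradict `p ∈ T(K)`.
If `p ∉ K`, then `p ∉ cl K` (since `K` is closed in `A`), and boundary bumping produces continua
through `p` missing `cl K` whose union `Y` has closure meeting `cl K`. Then `Y ⊆ A`, and `cl Y`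
meets `K`: otherwise `cl Y ⊆ A` as well, and `cl Y ∩ cl K ⊆ A ∩ cl K = K`. So `Y ∪ K` is a
connected subset of `A`, and `p ∈ K` after all.
-/

open Set Metric Filter Topology

/-- Jones' set function `T`. -/
def JonesT {X : Type*} [TopologicalSpace X] (A : Set X) : Set X :=
  {x | ∀ K : Set X, IsCompact K → IsConnected K → K ⊆ Aᶜ → x ∈ K → interior K = ∅}

section Connected

variable {X : Type*} [TopologicalSpace X]

theorem subset_connectedComponentIn_of_mem_closure {s F : Set X} {x : X}
    (hs : IsPreconnected s) (hsF : s ⊆ F) (hx : x ∈ closure s) (hxF : x ∈ F) :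
    s ⊆ connectedComponentIn F x :=
  (subset_insert x s).trans <|
    (hs.subset_closure (subset_insert x s) (insert_subset hx subset_closure)
      ).subset_connectedComponentIn (mem_insert x s) (insert_subset hxF hsF)

theorem mem_connectedComponentIn_of_mem_closure {F : Set X} {x y : X}
    (hx : x ∈ closure (connectedComponentIn F y)) (hxF : x ∈ F) :
    x ∈ connectedComponentIn F y := by
  have hy : y ∈ F := connectedComponentIn_nonempty_iff.mp (closure_nonempty_iff.mp ⟨x, hx⟩)
  have hsub := subset_connectedComponentIn_of_mem_closure isPreconnected_connectedComponentIn
    (connectedComponentIn_subset F y) hx hxF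
  rw [← connectedComponentIn_eq (hsub (mem_connectedComponentIn hy))]
  exact mem_connectedComponentIn hxF

theorem IsClosed.isClosed_connectedComponentIn {F : Set X} (hF : IsClosed F) (x : X) :
    IsClosed (connectedComponentIn F x) := by
  by_cases hx : x ∈ F
  · rw [connectedComponentIn_eq_image hx]
    exact hF.isClosedEmbedding_subtypeVal.isClosedMap _ isClosed_connectedComponent
  · rw [connectedComponentIn_eq_empty hx]
    exact isClosed_empty

/-- In a compact Hausdorff space components are quasi-components. -/
theorem exists_isClopen_of_disjoint_connectedComponent [CompactSpace X] [T2Space X] {x : X}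
    {D : Set X} (hD : IsClosed D) (hxD : Disjoint (connectedComponent x) D) :
    ∃ V, IsClopen V ∧ x ∈ V ∧ Disjoint V D := by
  let π : X → ConnectedComponents X := ConnectedComponents.mk
  have hπD : IsClosed (π '' D) :=
    (hD.isCompact.image ConnectedComponents.continuous_coe).isClosed
  have hx : π x ∉ π '' D := by
    rintro ⟨d, hd, hdx⟩
    rw [ConnectedComponents.coe_eq_coe] at hdx
    exact hxD.notMem_of_mem_right hd (hdx ▸ mem_connectedComponent)
  obtain ⟨V, hV, hxV, hVD⟩ := compact_exists_isClopen_in_isOpen hπD.isOpen_compl hx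
  refine ⟨π ⁻¹' V, hV.preimage ConnectedComponents.continuous_coe, hxV, ?_⟩
  exact disjoint_left.mpr fun d hdV hd => hVD hdV (mem_image_of_mem π hd)

/-- Boundary bumping. -/
theorem IsClosed.connectedComponentIn_inter_frontier_nonempty [CompactSpace X] [T2Space X]
    [PreconnectedSpace X] {F : Set X} (hF : IsClosed F) (hFne : F ≠ univ) {p : X} (hp : p ∈ F) :
    (connectedComponentIn F p ∩ frontier F).Nonempty := by
  by_contra hdisj
  have : CompactSpace F := isCompact_iff_compactSpace.mp hF.isCompact
  have hpD : Disjoint (connectedComponent (⟨p, hp⟩ : F)) (Subtype.val ⁻¹' frontier F) := by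
    refine disjoint_left.mpr fun z hz hzD => hdisj ⟨z, ?_, hzD⟩
    rw [connectedComponentIn_eq_image hp]
    exact mem_image_of_mem _ hz
  obtain ⟨V, hV, hpV, hVD⟩ := exists_isClopen_of_disjoint_connectedComponent
    (isClosed_frontier.preimage continuous_subtype_val) hpD
  obtain ⟨O, hO, rfl⟩ := isOpen_induced_iff.mp hV.isOpen
  have hE : F ∩ O = interior F ∩ O := by
    refine Subset.antisymm (fun y ⟨hyF, hyO⟩ => ⟨?_, hyO⟩)
      (inter_subset_inter_left O interior_subset)
    by_contra hyi
    exact hVD.notMem_of_mem_left (a := ⟨y, hyF⟩) hyO (hF.frontier_eq ▸ ⟨hyF, hyi⟩)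
  have hEclopen : IsClopen (F ∩ O) := by
    refine ⟨?_, hE ▸ isOpen_interior.inter hO⟩
    rw [← Subtype.image_preimage_coe]
    exact hF.isClosedEmbedding_subtypeVal.isClosedMap _ hV.isClosed
  rcases isClopen_iff.mp hEclopen with hE | hE
  · exact (hE ▸ ⟨hp, hpV⟩ : p ∈ (∅ : Set X))
  · exact hFne (univ_subset_iff.mp (hE ▸ inter_subset_left))

end Connected

section Metric

variable {X : Type*} [MetricSpace X]

theorem IsCompact.inter_nonempty_of_forall_infDist_le {C L : Set X} (hC : IsCompact C)
    (hL : IsClosed L) (hLne : L.Nonempty) {ε : ℕ → ℝ} (hε : Tendsto ε atTop (𝓝 0))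
    (h : ∀ n, ∃ z ∈ C, infDist z L ≤ ε n) : (C ∩ L).Nonempty := by
  obtain ⟨y, hyC, hymin⟩ := hC.exists_isMinOn ((h 0).imp fun _ hz => hz.1)
    (continuous_infDist_pt L).continuousOn
  refine ⟨y, hyC, (hL.mem_iff_infDist_zero hLne).mpr (le_antisymm ?_ infDist_nonneg)⟩
  refine ge_of_tendsto' hε fun n => ?_
  obtain ⟨z, hzC, hzε⟩ := h n
  exact (hymin hzC).trans hzε

/-- The sets `W n` are the components of `p` in `{z | δ / (n + 1) ≤ infDist z L}`, where
`δ = infDist p L`; boundary bumping pushes `W n` out to distance `δ / (n + 1)` from `L`. -/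
theorem exists_continua_in_compl_closure_iUnion_meets [CompactSpace X] [ConnectedSpace X]
    {L : Set X} (hL : IsClosed L) (hLne : L.Nonempty) {p : X} (hp : p ∉ L) :
    ∃ W : ℕ → Set X, (∀ n, IsCompact (W n) ∧ IsConnected (W n) ∧ W n ⊆ Lᶜ ∧ p ∈ W n) ∧
      (closure (⋃ n, W n) ∩ L).Nonempty := by
  set δ := infDist p L
  have hδ : 0 < δ := (hL.notMem_iff_infDist_pos hLne).mp hp
  set ε : ℕ → ℝ := fun n => δ / (n + 1)
  set F : ℕ → Set X := fun n => {z | ε n ≤ infDist z L}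
  have hFclosed : ∀ n, IsClosed (F n) := fun n =>
    isClosed_le continuous_const (continuous_infDist_pt L)
  have hpF : ∀ n, p ∈ F n := fun n => div_le_self hδ.le (le_add_of_nonneg_left n.cast_nonneg)
  have hFL : ∀ n, F n ⊆ Lᶜ := fun n z hz hzL =>
    (show 0 < ε n by positivity).not_ge (hz.trans_eq (infDist_zero_of_mem hzL))
  refine ⟨fun n => connectedComponentIn (F n) p, fun n =>
    ⟨((hFclosed n).isClosed_connectedComponentIn p).isCompact,
      isConnected_connectedComponentIn_iff.mpr (hpF n),
      (connectedComponentIn_subset _ _).trans (hFL n), mem_connectedComponentIn (hpF n)⟩, ?_⟩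
  refine isClosed_closure.isCompact.inter_nonempty_of_forall_infDist_le hL hLne
    (by simpa [ε, div_eq_mul_inv] using tendsto_one_div_add_atTop_nhds_zero_nat.const_mul δ)
    fun n => ?_
  obtain ⟨l, hl⟩ := hLne
  have hFne : F n ≠ univ := fun h => hFL n (h ▸ mem_univ l) hl
  obtain ⟨z, hzW, hzF⟩ :=
    (hFclosed n).connectedComponentIn_inter_frontier_nonempty hFne (hpF n)
  exact ⟨z, subset_closure (mem_iUnion.mpr ⟨n, hzW⟩),
    (frontier_le_subset_eq continuous_const (continuous_infDist_pt L) hzF).ge⟩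

end Metric

section JonesT

variable {X : Type*} [TopologicalSpace X]

theorem subset_jonesT (A : Set X) : A ⊆ JonesT A :=
  fun _ hx _ _ _ hKA hxK => absurd hx (hKA hxK)

theorem jonesT_mono {A B : Set X} (h : A ⊆ B) : JonesT A ⊆ JonesT B :=
  fun _ hx K hKc hKconn hKB => hx K hKc hKconn (hKB.trans (compl_subset_compl.mpr h))

theorem subset_of_mem_jonesT {A K C : Set X} {p : X} (hT : JonesT A = A) (hKA : K ⊆ A)
    (hp : p ∈ JonesT K) (hCc : IsCompact C) (hC : IsConnected C) (hCK : C ⊆ Kᶜ) (hpC : p ∈ C) :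
    C ⊆ A := by
  intro q hqC
  by_contra hqA
  rw [← hT] at hqA
  simp only [JonesT, mem_ofPred_eq, not_forall] at hqA
  obtain ⟨Z, hZc, hZ, hZA, hqZ, hZint⟩ := hqA
  have hCZ : IsConnected (C ∪ Z) := hC.union ⟨q, hqC, hqZ⟩ hZ
  have hCZK : C ∪ Z ⊆ Kᶜ := union_subset hCK (hZA.trans (compl_subset_compl.mpr hKA))
  refine hZint (subset_empty_iff.mp ?_)
  rw [← hp _ (hCc.union hZc) hCZ hCZK (Or.inl hpC)]
  exact interior_mono subset_union_right

end JonesT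

theorem stmt_16_general {X : Type*} [MetricSpace X] [CompactSpace X] [ConnectedSpace X]
    (A : Set X) (hT : JonesT A = A) (x : X) (hx : x ∈ A) :
    JonesT (connectedComponentIn A x) = connectedComponentIn A x := by
  set K := connectedComponentIn A x
  have hKA : K ⊆ A := connectedComponentIn_subset A x
  refine Subset.antisymm (fun p hp => ?_) (subset_jonesT K)
  have hpA : p ∈ A := hT ▸ jonesT_mono hKA hp
  by_contra hpK
  have hpcl : p ∉ closure K := fun h => hpK (mem_connectedComponentIn_of_mem_closure h hpA)
  obtain ⟨W, hW, w, hwY, hwK⟩ := exists_continua_in_compl_closure_iUnion_meets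
    isClosed_closure ⟨x, subset_closure (mem_connectedComponentIn hx)⟩ hpcl
  have hpY : p ∈ ⋃ n, W n := mem_iUnion.mpr ⟨0, (hW 0).2.2.2⟩
  have hY : IsPreconnected (⋃ n, W n) := isPreconnected_iUnion
    ⟨p, mem_iInter.mpr fun n => (hW n).2.2.2⟩ fun n => (hW n).2.1.isPreconnected
  have hYA : (⋃ n, W n) ⊆ A := iUnion_subset fun n => subset_of_mem_jonesT hT hKA hp (hW n).1
    (hW n).2.1 ((hW n).2.2.1.trans (compl_subset_compl.mpr subset_closure)) (hW n).2.2.2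
  obtain ⟨v, hvY, hvK⟩ : (closure (⋃ n, W n) ∩ K).Nonempty := by
    by_contra hYK
    have hclYA := subset_of_mem_jonesT hT hKA hp isClosed_closure.isCompact
      ⟨⟨p, subset_closure hpY⟩, hY.closure⟩ (fun y hy hyK => hYK ⟨y, hy, hyK⟩)
      (subset_closure hpY)
    exact hYK ⟨w, hwY, mem_connectedComponentIn_of_mem_closure hwK (hclYA hwY)⟩
  have hYK := subset_connectedComponentIn_of_mem_closure hY hYA hvY (hKA hvK)
  rw [← connectedComponentIn_eq hvK] at hYK
  exact hpK (hYK hpY)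

/-- Every connected component of a T-closed subset of a continuum is T-closed. -/
theorem stmt_16 {X : Type*} [MetricSpace X] [CompactSpace X] [ConnectedSpace X]
    [Nonempty X] (A : Set X) (hT : JonesT A = A) (x : X) (hx : x ∈ A) :
    JonesT (connectedComponentIn A x) = connectedComponentIn A x :=
  stmt_16_general A hT x hx
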